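/- Let S be a finite semigroup with the property that every identity u ≈ v that holds in S satisfies c(u) = c(v) (this holds precisely when the variety generated by S contains the two-element semilattice). Let n ≥ |S| + 4 and let f : Sⁿ → S be an operation that depends on all of its variables such that for each 1 ≤ i < j ≤ n there is a word w_{ij} over X_n with f_{ij} = w_{ij}^S. Then c(w_{ij}) = X_n \ {x_i} for all 1 ≤ i < j ≤ n. -/

import Mathlib

/-! ### Words and word functions -/

/-- The word `w^{(i j)}`: replace every occurrence of the letter `i` by `j`. -/
def subst {X : Type*} [DecidableEq X] (w : List X) (i j : X) : List X :=
  w.map fun t => if t = i then j else t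

/-- The prefix `s(w)`: the longest prefix of `w` containing all but one of the
letters of `c(w)` (the empty word if `w` is empty). -/
def wordS {X : Type*} [DecidableEq X] (w : List X) : List X :=
  w.take (w.toFinset.sup fun x => w.idxOf x)

/-- The letter `σ(w)` (the last letter of `w` to occur from the left), as a word of
length at most one; `s(w) ++ σ(w)` is the shortest prefix of `w` with full content. -/
def wordSigma {X : Type*} [DecidableEq X] (w : List X) : List X :=
  (w.drop (w.toFinset.sup fun x => w.idxOf x)).take 1

/-- The suffix `e(w)`, dual to `s(w)`. -/
def wordE {X : Type*} [DecidableEq X] (w : List X) : List X :=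
  (wordS w.reverse).reverse

/-- The letter `ε(w)` (as a word of length at most one), dual to `σ(w)`. -/
def wordEps {X : Type*} [DecidableEq X] (w : List X) : List X :=
  (wordSigma w.reverse).reverse

/-- The initial part `i₂(w)`: retain only the first occurrence from the left of
each letter of `w`. -/
def initPart {X : Type*} [DecidableEq X] (w : List X) : List X :=
  w.reverse.dedup.reverse

/-- The dual `F̄` of a word function `F`: `F̄(w) = reverse (F (reverse w))`. -/
def dualW {X : Type*} (F : List X → List X) (w : List X) : List X :=
  (F w.reverse).reverse

theorem wordS_length_lt {X : Type*} [DecidableEq X] {w : List X} (hw : w ≠ []) :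
    (wordS w).length < w.length := by
  have hpos : 0 < w.length := List.length_pos_iff.mpr hw
  have hk : (w.toFinset.sup fun x => w.idxOf x) < w.length := by
    rw [Finset.sup_lt_iff hpos]
    intro x hx
    exact List.idxOf_lt_length_iff.mpr (List.mem_toFinset.mp hx)
  simp only [wordS, List.length_take]
  omega

/-- The common recursion defining the word functions `h_m` and `i_m` of Gerhard
and Petrich: `t_m(w) = t_m(s(w)) · σ(w) · t̄_{m-1}(w)` for `m ≥ 3`, where the base
function (`h₂` = first letter, `i₂` = initial part) is a parameter, and all
functions send the empty word to the empty word. -/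
def tW {X : Type*} [DecidableEq X] (base : List X → List X) : ℕ → List X → List X
  | m, w =>
    if hw : w = [] then []
    else if hm : m ≤ 2 then base w
    else tW base m (wordS w) ++ wordSigma w ++ (tW base (m - 1) w.reverse).reverse
termination_by m w => m + w.length
decreasing_by
  · have := wordS_length_lt hw; omega
  · first | omega | (simp at *; omega) | (simp at *)

/-- The word function `h_m` (`m ≥ 2`): `h₂(w)` is the first letter of `w`, and
`h_m(w) = h_m(s(w)) · σ(w) · h̄_{m-1}(w)` for `m ≥ 3`. -/
def hW {X : Type*} [DecidableEq X] : ℕ → List X → List X :=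
  tW fun w => w.take 1

/-- The word function `i_m` (`m ≥ 2`): `i₂(w)` is the initial part of `w`, and
`i_m(w) = i_m(s(w)) · σ(w) · ī_{m-1}(w)` for `m ≥ 3`. -/
def iW {X : Type*} [DecidableEq X] : ℕ → List X → List X :=
  tW initPart

/-! ### Operations induced by words -/

/-- Evaluation of a word `w` over the alphabet `X` in a semigroup `S` under the
assignment `a : X → S`, computed in the monoid `WithOne S` (so that the empty word
evaluates to `1` and a nonempty word to the coercion of its value in `S`). -/
def evalW {X S : Type*} [Semigroup S] (a : X → S) (w : List X) : WithOne S :=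
  (w.map fun t => (a t : WithOne S)).prod

/-- The identification minor `f_{i j}` of an `n`-ary operation: the `i`-th argument
is replaced by the `j`-th. -/
def minor {α β : Type*} {n : ℕ} (f : (Fin n → α) → β) (i j : Fin n) :
    (Fin n → α) → β :=
  fun a => f (Function.update a i (a j))

/-- `f` depends on its `i`-th variable. -/
def DependsOnVar {α β : Type*} {n : ℕ} (f : (Fin n → α) → β) (i : Fin n) : Prop :=
  ∃ a b : Fin n → α, (∀ k : Fin n, k ≠ i → a k = b k) ∧ f a ≠ f b

/-- `f : Sⁿ → S` is induced by a (nonempty) word over `X_n = {x_1, …, x_n}`. -/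
def InducedByWord {S : Type*} [Semigroup S] {n : ℕ} (f : (Fin n → S) → S) : Prop :=
  ∃ w : List (Fin n), w ≠ [] ∧ ∀ a : Fin n → S, (f a : WithOne S) = evalW a w

/-!
Identifying `x_i` with `x_j` in `f_{ij}` changes nothing, so `w_{ij} ≈ w_{ij}^{(ij)}` holds
in `S` and `x_i ∉ c(w_{ij})`. Identification minors along disjoint pairs commute, so
`w_{ij}^{(pq)} ≈ w_{pq}^{(ij)}` and the two sides have equal content. Finally, if `f` depends
on `x_k` via tuples `a`, `b`, then since `n - 3 > |S|` there are `p < q` outside any three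
given indices with `a_p = a_q`; on such tuples `f` agrees with `f_{pq}`, which forces
`x_k ∈ c(w_{pq})`. Transporting `x_k` through the commutation identity puts it into
`c(w_{ij})`.
-/

section Words

variable {X : Type*}

lemma evalW_congr {S : Type*} [Semigroup S] {a b : X → S} {w : List X}
    (h : ∀ t ∈ w, a t = b t) : evalW a w = evalW b w := by
  simp only [evalW]
  congr 1
  exact List.map_congr_left fun t ht => by rw [h t ht]

variable [DecidableEq X]

lemma subst_ne_nil {w : List X} (hw : w ≠ []) (i j : X) : subst w i j ≠ [] := by
  simp [subst, hw]

lemma mem_subst {w : List X} {m i j : X} :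
    m ∈ subst w i j ↔ (m ∈ w ∧ m ≠ i) ∨ (m = j ∧ i ∈ w) := by
  simp only [subst, List.mem_map]
  constructor
  · rintro ⟨t, ht, rfl⟩
    split_ifs with hti
    · exact Or.inr ⟨rfl, hti ▸ ht⟩
    · exact Or.inl ⟨ht, hti⟩
  · rintro (⟨hm, hmi⟩ | ⟨rfl, hi⟩)
    · exact ⟨m, hm, if_neg hmi⟩
    · exact ⟨i, hi, if_pos rfl⟩

lemma notMem_subst {w : List X} {i j : X} (hij : i ≠ j) : i ∉ subst w i j := by
  simp [mem_subst, hij]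

lemma evalW_subst {S : Type*} [Semigroup S] (a : X → S) (w : List X) (i j : X) :
    evalW a (subst w i j) = evalW (Function.update a i (a j)) w := by
  simp only [evalW, subst, List.map_map]
  congr 1
  refine List.map_congr_left fun t _ => ?_
  by_cases h : t = i <;> simp [h]

end Words

section Minor

variable {α β : Type*} {n : ℕ}

lemma minor_apply_of_eq (f : (Fin n → α) → β) {i j : Fin n} {a : Fin n → α}
    (ha : a i = a j) : minor f i j a = f a := by
  rw [minor, ← ha, Function.update_eq_self]

lemma minor_update_self (f : (Fin n → α) → β) {i j : Fin n} (hij : i ≠ j)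
    (a : Fin n → α) :
    minor f i j (Function.update a i (a j)) = minor f i j a := by
  rw [minor, Function.update_of_ne hij.symm, Function.update_idem, minor]

lemma minor_minor_comm (f : (Fin n → α) → β) {i j p q : Fin n}
    (hip : i ≠ p) (hiq : i ≠ q) (hjp : j ≠ p) :
    minor (minor f i j) p q = minor (minor f p q) i j := by
  funext a
  simp only [minor]
  rw [Function.update_of_ne hjp, Function.update_of_ne hiq.symm,
    Function.update_comm hip.symm]

end Minor

/-- An identity `u ≈ v` is *regular* if `c(u) = c(v)`. -/
def OnlyRegularIdentities (S X : Type*) [Semigroup S] [DecidableEq X] : Prop :=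
  ∀ u v : List X, u ≠ [] → v ≠ [] → (∀ a : X → S, evalW a u = evalW a v) →
    u.toFinset = v.toFinset

section Scheme

variable {S : Type*} [Semigroup S] {n : ℕ} {f : (Fin n → S) → S}

lemma notMem_of_minor_eq_evalW (hsat : OnlyRegularIdentities S (Fin n))
    {i j : Fin n} (hij : i ≠ j) {u : List (Fin n)} (hu : u ≠ [])
    (hf : ∀ a, ((minor f i j a : S) : WithOne S) = evalW a u) : i ∉ u := by
  have hid : ∀ a : Fin n → S, evalW a u = evalW a (subst u i j) := fun a => by
    rw [evalW_subst, ← hf, ← hf, minor_update_self f hij]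
  have hcontent := hsat u _ hu (subst_ne_nil hu i j) hid
  intro hi
  exact notMem_subst hij (List.mem_toFinset.mp (hcontent ▸ List.mem_toFinset.mpr hi))

lemma toFinset_subst_eq_of_minor_eq_evalW (hsat : OnlyRegularIdentities S (Fin n))
    {i j p q : Fin n} (hip : i ≠ p) (hiq : i ≠ q) (hjp : j ≠ p)
    {u v : List (Fin n)} (hu : u ≠ []) (hv : v ≠ [])
    (hfu : ∀ a, ((minor f i j a : S) : WithOne S) = evalW a u)
    (hfv : ∀ a, ((minor f p q a : S) : WithOne S) = evalW a v) :
    (subst u p q).toFinset = (subst v i j).toFinset := by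
  refine hsat _ _ (subst_ne_nil hu p q) (subst_ne_nil hv i j) fun a => ?_
  rw [evalW_subst, evalW_subst, ← hfu, ← hfv]
  exact congrArg _ (congrFun (minor_minor_comm f hip hiq hjp) a)

lemma mem_of_minor_eq_evalW {p q k : Fin n} {u : List (Fin n)}
    (hf : ∀ a, ((minor f p q a : S) : WithOne S) = evalW a u) {a b : Fin n → S}
    (hab : ∀ t, t ≠ k → a t = b t) (ha : a p = a q) (hb : b p = b q) (hne : f a ≠ f b) :
    k ∈ u := by
  by_contra hk
  refine hne (WithOne.coe_inj.mp ?_)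
  rw [← minor_apply_of_eq f ha, ← minor_apply_of_eq f hb, hf, hf]
  exact evalW_congr fun t ht => hab t (ne_of_mem_of_not_mem ht hk)

lemma exists_lt_mem_of_dependsOnVar [Fintype S] {k : Fin n} (hk : DependsOnVar f k)
    {u : Fin n → Fin n → List (Fin n)}
    (hf : ∀ p q, p < q → ∀ a, ((minor f p q a : S) : WithOne S) = evalW a (u p q))
    {T : Finset (Fin n)} (hkT : k ∈ T) (hT : Fintype.card S < Tᶜ.card) :
    ∃ p q, p < q ∧ p ∉ T ∧ q ∉ T ∧ k ∈ u p q := by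
  obtain ⟨a, b, hab, hne⟩ := hk
  obtain ⟨p, hp, q, hq, hpq, hapq⟩ :=
    Finset.exists_ne_map_eq_of_card_lt_of_maps_to (t := Finset.univ) hT
      fun t _ => Finset.mem_univ (a t)
  rw [Finset.mem_compl] at hp hq
  wlog hlt : p < q generalizing p q
  · exact this q hq p hp hpq.symm hapq.symm (lt_of_le_of_ne (not_lt.mp hlt) hpq.symm)
  have hb : b p = b q := by
    rw [← hab p (ne_of_mem_of_not_mem hkT hp).symm, ← hab q (ne_of_mem_of_not_mem hkT hq).symm,
      hapq]
  exact ⟨p, q, hlt, hp, hq, mem_of_minor_eq_evalW (hf p q hlt) hab hapq hb hne⟩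

end Scheme

/-- Let `S` be a finite semigroup in which every valid identity
`u ≈ v` satisfies `c(u) = c(v)`. If `n ≥ |S| + 4` and `f : Sⁿ → S` depends on all
of its variables and all of its identification minors are induced by words
`w_{ij}`, then `c(w_{ij}) = X_n \ {x_i}` for all `i < j`. -/
theorem essential_scheme_content
    {S : Type*} [Semigroup S] [Fintype S]
    (hsat : ∀ (k : ℕ) (u v : List (Fin k)), u ≠ [] → v ≠ [] →
      (∀ a : Fin k → S, evalW a u = evalW a v) → u.toFinset = v.toFinset)
    (n : ℕ) (hn : Fintype.card S + 4 ≤ n)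
    (f : (Fin n → S) → S)
    (hdep : ∀ i : Fin n, DependsOnVar f i)
    (w : Fin n → Fin n → List (Fin n))
    (hw : ∀ i j : Fin n, i < j → (w i j) ≠ [] ∧
      ∀ a : Fin n → S, ((minor f i j a : S) : WithOne S) = evalW a (w i j)) :
    ∀ i j : Fin n, i < j → (w i j).toFinset = Finset.univ \ {i} := by
  intro i j hij
  obtain ⟨hwij, hfij⟩ := hw i j hij
  ext k
  simp only [Finset.mem_sdiff, Finset.mem_univ, Finset.mem_singleton, true_and,
    List.mem_toFinset]
  constructor
  · rintro hk rfl
    exact notMem_of_minor_eq_evalW (hsat n) hij.ne hwij hfij hk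
  intro hki
  have hT : Fintype.card S < ({i, j, k} : Finset (Fin n))ᶜ.card := by
    rw [Finset.card_compl, Fintype.card_fin]
    have := Finset.card_le_three (a := i) (b := j) (c := k)
    omega
  obtain ⟨p, q, hpq, hp, hq, hkpq⟩ := exists_lt_mem_of_dependsOnVar (hdep k)
    (fun p q hpq => (hw p q hpq).2) (by simp) hT
  simp only [Finset.mem_insert, Finset.mem_singleton, not_or] at hp hq
  obtain ⟨hwpq, hfpq⟩ := hw p q hpq
  have hcontent := toFinset_subst_eq_of_minor_eq_evalW (hsat n) (Ne.symm hp.1) (Ne.symm hq.1)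
    (Ne.symm hp.2.1) hwij hwpq hfij hfpq
  have hk : k ∈ subst (w p q) i j := mem_subst.mpr (Or.inl ⟨hkpq, hki⟩)
  rw [← List.mem_toFinset, ← hcontent, List.mem_toFinset, mem_subst] at hk
  rcases hk with ⟨hk, -⟩ | ⟨rfl, -⟩
  · exact hk
  · exact absurd rfl hq.2.2
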